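/- The tetrahedral group T(5,5;2,2;2,3), presented as ⟨f1, f2, f3, f4 | f1^2 = f2^2 = f3^2 = f4^3 = 1, f1 f2 f3 f4 = 1, (f1 f2)^5 = 1, (f2 f4)^5 = 1⟩, admits a surjective homomorphism onto the alternating group A5. -/
import Mathlib


open FreeGroup

/-- The relators of the tetrahedral group `T(n,m;2,2;c,3)` on generators
`f1 = of 0, f2 = of 1, f3 = of 2, f4 = of 3`:
`f1^c = f2^2 = f3^2 = f4^3 = 1`, `f1 f2 f3 f4 = 1`, `(f1 f2)^n = 1`, `(f2 f4)^m = 1`. -/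
def tetRels (n m c : ℕ) : Set (FreeGroup (Fin 4)) :=
  {of 0 ^ c, of 1 ^ 2, of 2 ^ 2, of 3 ^ 3,
   of 0 * of 1 * of 2 * of 3, (of 0 * of 1) ^ n, (of 1 * of 3) ^ m}

namespace TetAux

/-- `(1 2)(3 4)` -/
def a : Equiv.Perm (Fin 5) := Equiv.swap 1 2 * Equiv.swap 3 4
/-- `(0 1)(2 3)` -/
def b : Equiv.Perm (Fin 5) := Equiv.swap 0 1 * Equiv.swap 2 3
/-- `(0 1)(3 4)` -/
def c : Equiv.Perm (Fin 5) := Equiv.swap 0 1 * Equiv.swap 3 4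
/-- `(1 4 2)` -/
def d : Equiv.Perm (Fin 5) := Equiv.swap 1 4 * Equiv.swap 4 2

lemma ha5 : a ∈ alternatingGroup (Fin 5) := by
  rw [Equiv.Perm.mem_alternatingGroup]; decide
lemma hb5 : b ∈ alternatingGroup (Fin 5) := by
  rw [Equiv.Perm.mem_alternatingGroup]; decide
lemma hc5 : c ∈ alternatingGroup (Fin 5) := by
  rw [Equiv.Perm.mem_alternatingGroup]; decide
lemma hd5 : d ∈ alternatingGroup (Fin 5) := by
  rw [Equiv.Perm.mem_alternatingGroup]; decide

/-- The images of the four generators. -/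
def f : Fin 4 → alternatingGroup (Fin 5) := ![⟨a, ha5⟩, ⟨b, hb5⟩, ⟨c, hc5⟩, ⟨d, hd5⟩]

set_option maxRecDepth 4000 in
lemma key : ∀ σ : Equiv.Perm (Fin 5), σ ^ 3 = 1 → σ ≠ 1 →
    σ ∈ [d, a*d, d*a, d*d, a*d*a, a*d*d, b*d*b, d*a*d, d*d*a, a*b*a*d, a*d*a*b,
      a*d*b*d, b*a*d*a, b*d*a*d, b*d*d*b, d*a*d*b, d*b*d*a, b*d*a*d*b, b*d*a*d*d,
      b*d*d*a*b] := by decide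

lemma hrels : ∀ r ∈ tetRels 5 5 2, FreeGroup.lift f r = 1 := by
  intro r hr
  simp only [tetRels, Set.mem_insert_iff, Set.mem_singleton_iff] at hr
  rcases hr with rfl | rfl | rfl | rfl | rfl | rfl | rfl <;>
    · apply Subtype.ext
      simp only [map_pow, _root_.map_mul, FreeGroup.lift_apply_of, f, Matrix.cons_val_zero,
        Matrix.cons_val_one, Matrix.head_cons, Matrix.cons_val_two, Matrix.tail_cons,
        Matrix.cons_val_three, SubmonoidClass.coe_pow, Subgroup.coe_mul, OneMemClass.coe_one]
      decide

end TetAux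

/-- The tetrahedral group `T(5,5;2,2;2,3)` surjects onto the alternating group `A5`. -/
theorem tet_5_5_2_surjects_onto_A5 :
    ∃ φ : PresentedGroup (tetRels 5 5 2) →* alternatingGroup (Fin 5),
      Function.Surjective φ := by
  open TetAux in
  refine ⟨PresentedGroup.toGroup hrels, ?_⟩
  set φ := PresentedGroup.toGroup hrels with hφ
  set ψ := (alternatingGroup (Fin 5)).subtype.comp φ with hψ
  have hgen : ∀ i : Fin 4, ψ (PresentedGroup.of i) = (f i : Equiv.Perm (Fin 5)) := by
    intro i
    simp [hψ, hφ, PresentedGroup.toGroup.of]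
  have ha : a ∈ ψ.range := ⟨PresentedGroup.of 0, hgen 0⟩
  have hb : b ∈ ψ.range := ⟨PresentedGroup.of 1, hgen 1⟩
  have hd : d ∈ ψ.range := ⟨PresentedGroup.of 3, hgen 3⟩
  have hle : alternatingGroup (Fin 5) ≤ ψ.range := by
    rw [← Equiv.Perm.closure_three_cycles_eq_alternating]
    refine (Subgroup.closure_le _).2 ?_
    intro σ hσ
    have h3 : σ ^ 3 = 1 := by
      rw [← hσ.orderOf]; exact pow_orderOf_eq_one σ
    have hne : σ ≠ 1 := by
      intro h; rw [h] at hσ; exact (by norm_num : (1:ℕ) ≠ 3) (by simpa using hσ.orderOf)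
    have hmem := key σ h3 hne
    simp only [List.mem_cons, List.not_mem_nil, or_false] at hmem
    rcases hmem with rfl|rfl|rfl|rfl|rfl|rfl|rfl|rfl|rfl|rfl|rfl|rfl|rfl|rfl|rfl|rfl|rfl|rfl|rfl|rfl
    · exact hd
    · exact mul_mem ha hd
    · exact mul_mem hd ha
    · exact mul_mem hd hd
    · exact mul_mem (mul_mem ha hd) ha
    · exact mul_mem (mul_mem ha hd) hd
    · exact mul_mem (mul_mem hb hd) hb
    · exact mul_mem (mul_mem hd ha) hd
    · exact mul_mem (mul_mem hd hd) ha
    · exact mul_mem (mul_mem (mul_mem ha hb) ha) hd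
    · exact mul_mem (mul_mem (mul_mem ha hd) ha) hb
    · exact mul_mem (mul_mem (mul_mem ha hd) hb) hd
    · exact mul_mem (mul_mem (mul_mem hb ha) hd) ha
    · exact mul_mem (mul_mem (mul_mem hb hd) ha) hd
    · exact mul_mem (mul_mem (mul_mem hb hd) hd) hb
    · exact mul_mem (mul_mem (mul_mem hd ha) hd) hb
    · exact mul_mem (mul_mem (mul_mem hd hb) hd) ha
    · exact mul_mem (mul_mem (mul_mem (mul_mem hb hd) ha) hd) hb
    · exact mul_mem (mul_mem (mul_mem (mul_mem hb hd) ha) hd) hd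
    · exact mul_mem (mul_mem (mul_mem (mul_mem hb hd) hd) ha) hb
  intro y
  obtain ⟨x, hx⟩ := hle y.2
  refine ⟨x, Subtype.ext ?_⟩
  simpa [hψ] using hx
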